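/- arXiv:1101.3969 — 2 statements merged into one kernel-verified Lean document; each statement's English description precedes it below -/
import Mathlib

section
/- The operator M := (P_{ℝ^+} P_+ P_{ℝ^+})|_{L^2(ℝ^+; ℂ)} is injective on L^2(ℝ^+; ℂ). -/
open MeasureTheory Complex Filter Set
open scoped Real ComplexOrder

noncomputable section

/-- The Hilbert space `L²(ℝ; ℂ)`. -/
abbrev Hsp : Type := Lp ℂ 2 (volume : Measure ℝ)

/-- The set of boundary values on `ℝ` of Hardy-class functions analytic in the
upper half-plane (with uniformly bounded `L²` norms on horizontal lines, attaining the
given boundary value in the `L²` sense). -/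
def hardySet : Set Hsp :=
  {g | ∃ F : ℂ → ℂ,
    DifferentiableOn ℂ F {z : ℂ | 0 < z.im} ∧
    (∃ C : ℝ, ∀ b : ℝ, 0 < b → (∫ a : ℝ, ‖F ((a : ℂ) + (b : ℂ) * I)‖ ^ 2) ≤ C) ∧
    Tendsto (fun b : ℝ => ∫ a : ℝ, ‖F ((a : ℂ) + (b : ℂ) * I) - g a‖ ^ 2)
      (nhdsWithin 0 (Ioi 0)) (nhds 0)}

/-- The Hardy space `H²₊(ℝ; ℂ)` as a closed subspace of `L²(ℝ; ℂ)`. -/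
def hardySubmodule : Submodule ℂ Hsp := (Submodule.span ℂ hardySet).topologicalClosure

instance : CompleteSpace hardySubmodule :=
  (Submodule.isClosed_topologicalClosure _).completeSpace_coe

/-- The orthogonal projection `P₊` of `L²(ℝ; ℂ)` onto the Hardy space `H²₊(ℝ; ℂ)`. -/
def Pplus : Hsp →L[ℂ] Hsp := hardySubmodule.subtypeL.comp (Submodule.orthogonalProjectionOnto hardySubmodule)

/-- The set of elements of `L²(ℝ; ℂ)` supported (a.e.) on `ℝ⁺`. -/
def posSuppSet : Set Hsp := {f | ∀ᵐ x : ℝ, x ≤ 0 → f x = 0}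

/-- `L²(ℝ⁺; ℂ)` as a closed subspace of `L²(ℝ; ℂ)`. -/
def posSupp : Submodule ℂ Hsp := (Submodule.span ℂ posSuppSet).topologicalClosure

instance : CompleteSpace posSupp :=
  (Submodule.isClosed_topologicalClosure _).completeSpace_coe

/-- The orthogonal projection `P_{ℝ⁺}` of `L²(ℝ; ℂ)` onto `L²(ℝ⁺; ℂ)`. -/
def PposL : Hsp →L[ℂ] Hsp := posSupp.subtypeL.comp (Submodule.orthogonalProjectionOnto posSupp)

/-- The Lyapunov operator `M = P_{ℝ⁺} P₊ P_{ℝ⁺}` on `L²(ℝ; ℂ)`. -/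
def Mop : Hsp →L[ℂ] Hsp := PposL.comp (Pplus.comp PposL)

/-- The Lyapunov operator `M = (P_{ℝ⁺} P₊ P_{ℝ⁺})|_{L²(ℝ⁺;ℂ)}` on `L²(ℝ⁺; ℂ)`. -/
def Msub : posSupp →L[ℂ] posSupp :=
  (Submodule.orthogonalProjectionOnto posSupp).comp (Pplus.comp posSupp.subtypeL)

lemma memU (t : ℝ) (ψ : Hsp) :
    MemLp (fun x : ℝ => Complex.exp (-(I * (x : ℂ) * (t : ℂ))) * ψ x) 2 volume := by
  have hm : AEStronglyMeasurable (fun x : ℝ => Complex.exp (-(I * (x : ℂ) * (t : ℂ)))) volume := by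
    apply Continuous.aestronglyMeasurable
    continuity
  refine MemLp.of_le (Lp.memLp ψ) (hm.mul (Lp.aestronglyMeasurable ψ)) ?_
  filter_upwards with x
  have : ‖Complex.exp (-(I * (x : ℂ) * (t : ℂ)))‖ = 1 := by
    rw [Complex.norm_exp]
    simp
  rw [norm_mul, this, one_mul]

/-- The unitary evolution `U(t)`: `(U(t)ψ)(E) = e^{-iEt} ψ(E)`. -/
def U (t : ℝ) (ψ : Hsp) : Hsp := (memU t ψ).toLp _




namespace LyapAux


lemma kern_eq {v : ℝ} (hv : 0 < v) (x : ℝ) :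
    (v^2)⁻¹ * (1 + (v⁻¹ * x)^2)⁻¹ = (x^2 + v^2)⁻¹ := by
  rw [← mul_inv]
  congr 1
  field_simp
  ring

lemma integrable_kern {v : ℝ} (hv : 0 < v) (u : ℝ) :
    Integrable (fun x : ℝ => ((x - u)^2 + v^2)⁻¹) := by
  have h1 : Integrable (fun x : ℝ => (v^2)⁻¹ * (1 + (v⁻¹ * x)^2)⁻¹) :=
    (integrable_inv_one_add_sq.comp_mul_left' (inv_ne_zero hv.ne')).const_mul _
  have h2 : Integrable (fun x : ℝ => (x^2 + v^2)⁻¹) := by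
    refine h1.congr (Filter.Eventually.of_forall fun x => ?_)
    exact kern_eq hv x
  simpa using h2.comp_sub_right u

lemma integral_kern {v : ℝ} (hv : 0 < v) (u : ℝ) :
    ∫ x : ℝ, ((x - u)^2 + v^2)⁻¹ = π / v := by
  have h0 : ∫ x : ℝ, ((x - u)^2 + v^2)⁻¹
      = ∫ x : ℝ, (x^2 + v^2)⁻¹ :=
    MeasureTheory.integral_sub_right_eq_self (fun y : ℝ => (y^2 + v^2)⁻¹) u
  rw [h0]
  simp_rw [fun x => (kern_eq hv x).symm]
  rw [MeasureTheory.integral_const_mul]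
  have h3 := MeasureTheory.Measure.integral_comp_mul_left (fun y : ℝ => (1 + y^2)⁻¹) v⁻¹
  rw [h3, integral_univ_inv_one_add_sq]
  rw [abs_of_pos (by positivity : (0:ℝ) < v⁻¹⁻¹), smul_eq_mul]
  field_simp

lemma pow_inv_le {a t : ℝ} (ha : 0 < a) (hat : a ≤ t) (n : ℕ) :
    (t⁻¹)^(n+1) ≤ (a⁻¹)^n * t⁻¹ := by
  have ht : 0 < t := lt_of_lt_of_le ha hat
  have hinv : t⁻¹ ≤ a⁻¹ := inv_anti₀ ha hat
  calc (t⁻¹)^(n+1) = (t⁻¹)^n * t⁻¹ := by ring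
    _ ≤ (a⁻¹)^n * t⁻¹ := by
        have h1 : (t⁻¹)^n ≤ (a⁻¹)^n := pow_le_pow_left₀ (by positivity) hinv n
        have h2 : (0:ℝ) ≤ t⁻¹ := by positivity
        exact mul_le_mul_of_nonneg_right h1 h2

lemma norm_sq_ofReal_add_mul_I_sub (a b : ℝ) (c : ℂ) :
    ‖(a:ℂ) + (b:ℂ) * I - c‖^2 = (a - c.re)^2 + (b - c.im)^2 := by
  rw [Complex.sq_norm, Complex.normSq_apply]
  simp
  ring

lemma norm_sq_ofReal_sub (a : ℝ) (c : ℂ) :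
    ‖(a:ℂ) - c‖^2 = (a - c.re)^2 + c.im^2 := by
  rw [Complex.sq_norm, Complex.normSq_apply]
  simp
  ring

lemma inv_pow_sub_bound (n : ℕ) {A B : ℂ} (hAB : ‖B‖ ≤ ‖A‖) (hB : B ≠ 0) :
    ‖A⁻¹^n - B⁻¹^n‖ ≤ n * ‖A - B‖ * (‖B‖⁻¹)^(n+1) := by
  have hBpos : 0 < ‖B‖ := norm_pos_iff.2 hB
  have hApos : 0 < ‖A‖ := lt_of_lt_of_le hBpos hAB
  have hA : A ≠ 0 := norm_pos_iff.1 hApos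
  induction n with
  | zero => simp
  | succ n ih =>
    have key : A⁻¹^(n+1) - B⁻¹^(n+1)
        = A⁻¹ * (A⁻¹^n - B⁻¹^n) + (A⁻¹ - B⁻¹) * B⁻¹^n := by ring
    have h1 : ‖A⁻¹‖ ≤ ‖B‖⁻¹ := by
      rw [norm_inv]
      exact inv_anti₀ hBpos hAB
    have h2 : ‖A⁻¹ - B⁻¹‖ ≤ ‖A - B‖ * (‖B‖⁻¹ * ‖B‖⁻¹) := by
      have e : A⁻¹ - B⁻¹ = (B - A) * (A⁻¹ * B⁻¹) := by
        field_simp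
      rw [e, norm_mul, norm_mul, norm_inv, norm_inv, norm_sub_rev]
      have h4 : ‖A‖⁻¹ ≤ ‖B‖⁻¹ := inv_anti₀ hBpos hAB
      have h5 : (0:ℝ) ≤ ‖B‖⁻¹ := by positivity
      exact mul_le_mul_of_nonneg_left (mul_le_mul_of_nonneg_right h4 h5) (norm_nonneg _)
    have h3 : ‖B⁻¹^n‖ = (‖B‖⁻¹)^n := by rw [norm_pow, norm_inv]
    have hn1 : ‖A⁻¹ * (A⁻¹^n - B⁻¹^n)‖ ≤ ‖B‖⁻¹ * (n * ‖A - B‖ * (‖B‖⁻¹)^(n+1)) := by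
      rw [norm_mul]
      have := ih
      have h5 : (0:ℝ) ≤ ‖A⁻¹‖ := norm_nonneg _
      have h7 : (0:ℝ) ≤ ‖B‖⁻¹ := by positivity
      calc ‖A⁻¹‖ * ‖A⁻¹^n - B⁻¹^n‖ ≤ ‖B‖⁻¹ * ‖A⁻¹^n - B⁻¹^n‖ :=
            mul_le_mul_of_nonneg_right h1 (norm_nonneg _)
        _ ≤ ‖B‖⁻¹ * (n * ‖A - B‖ * (‖B‖⁻¹)^(n+1)) :=
            mul_le_mul_of_nonneg_left ih h7
    have hn2 : ‖(A⁻¹ - B⁻¹) * B⁻¹^n‖ ≤ (‖A - B‖ * (‖B‖⁻¹ * ‖B‖⁻¹)) * (‖B‖⁻¹)^n := by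
      rw [norm_mul, h3]
      exact mul_le_mul_of_nonneg_right h2 (by positivity)
    calc ‖A⁻¹^(n+1) - B⁻¹^(n+1)‖
        ≤ ‖A⁻¹ * (A⁻¹^n - B⁻¹^n)‖ + ‖(A⁻¹ - B⁻¹) * B⁻¹^n‖ := by
          rw [key]; exact norm_add_le _ _
      _ ≤ ‖B‖⁻¹ * (n * ‖A - B‖ * (‖B‖⁻¹)^(n+1)) + (‖A - B‖ * (‖B‖⁻¹ * ‖B‖⁻¹)) * (‖B‖⁻¹)^n :=
          add_le_add hn1 hn2
      _ = ((n+1 : ℕ) : ℝ) * ‖A - B‖ * (‖B‖⁻¹)^(n+1+1) := by push_cast; ring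


/-- the test functions -/
def gfun (c : ℂ) (n : ℕ) : ℝ → ℂ := fun x => (((x:ℂ) - c)⁻¹)^n

lemma cont_gfun {c : ℂ} {n : ℕ} (hc : c.im < 0) : Continuous (gfun c n) := by
  refine Continuous.pow ?_ n
  refine Continuous.inv₀ (by continuity) (fun x => ?_)
  intro h
  have := congrArg Complex.im h
  simp at this
  linarith

lemma norm_sq_gfun {c : ℂ} {n : ℕ} (x : ℝ) :
    ‖gfun c n x‖^2 = (((x - c.re)^2 + c.im^2)⁻¹)^n := by
  calc ‖gfun c n x‖^2 = ((‖(x:ℂ)-c‖⁻¹)^n)^2 := by rw [gfun]; rw [norm_pow, norm_inv]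
    _ = ((‖(x:ℂ)-c‖^2)⁻¹)^n := by rw [← pow_mul, mul_comm n 2, pow_mul, inv_pow]
    _ = (((x - c.re)^2 + c.im^2)⁻¹)^n := by rw [norm_sq_ofReal_sub]

lemma memLp_gfun {n : ℕ} (hn : 1 ≤ n) {c : ℂ} (hc : c.im < 0) :
    MemLp (gfun c n) 2 (volume : Measure ℝ) := by
  have hv : 0 < -c.im := by linarith
  obtain ⟨m, rfl⟩ : ∃ m, n = m + 1 := ⟨n - 1, (Nat.succ_pred_eq_of_pos hn).symm⟩
  rw [memLp_two_iff_integrable_sq_norm (cont_gfun hc).aestronglyMeasurable]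
  refine Integrable.mono' (((integrable_kern hv c.re).const_mul ((((-c.im)^2)⁻¹)^m)))
    (((cont_gfun hc).norm.pow 2).aestronglyMeasurable)
    (Filter.Eventually.of_forall fun x => ?_)
  rw [Real.norm_of_nonneg (by positivity), norm_sq_gfun]
  have h1 : ((-c.im)^2 : ℝ) ≤ (x - c.re)^2 + c.im^2 := by nlinarith [sq_nonneg (x - c.re)]
  have h2 := pow_inv_le (by positivity : (0:ℝ) < (-c.im)^2) h1 m
  calc (((x - c.re)^2 + c.im^2)⁻¹)^(m+1)
      ≤ (((-c.im)^2)⁻¹)^m * ((x - c.re)^2 + c.im^2)⁻¹ := h2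
    _ = (((-c.im)^2)⁻¹)^m * ((x - c.re)^2 + (-c.im)^2)⁻¹ := by ring_nf

lemma toLp_gfun_mem_hardySet {n : ℕ} (hn : 1 ≤ n) {c : ℂ} (hc : c.im < 0) :
    ((memLp_gfun hn hc).toLp (gfun c n)) ∈ hardySet := by
  have hv : 0 < -c.im := by linarith
  obtain ⟨m, hm⟩ : ∃ m, n = m + 1 := ⟨n - 1, (Nat.succ_pred_eq_of_pos hn).symm⟩
  refine ⟨fun z => ((z - c)⁻¹)^n, ?_, ⟨((((-c.im)^2)⁻¹)^m) * (π / -c.im), ?_⟩, ?_⟩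
  · have h1 : DifferentiableOn ℂ (fun z : ℂ => (z - c)⁻¹) {z : ℂ | 0 < z.im} := by
      refine DifferentiableOn.inv ?_ ?_
      · exact (differentiable_id.sub_const c).differentiableOn
      · intro z hz h0
        have hzc : z = c := sub_eq_zero.mp h0
        rw [Set.mem_setOf_eq, hzc] at hz
        linarith
    exact h1.pow n
  · intro b hb
    have hpt : ∀ a : ℝ, ‖(((a:ℂ) + (b:ℂ)*I - c)⁻¹)^n‖^2
        = (((a - c.re)^2 + (b - c.im)^2)⁻¹)^n := by
      intro a
      calc ‖(((a:ℂ) + (b:ℂ)*I - c)⁻¹)^n‖^2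
          = ((‖(a:ℂ) + (b:ℂ)*I - c‖⁻¹)^n)^2 := by rw [norm_pow, norm_inv]
        _ = ((‖(a:ℂ) + (b:ℂ)*I - c‖^2)⁻¹)^n := by
            rw [← pow_mul, mul_comm n 2, pow_mul, inv_pow]
        _ = (((a - c.re)^2 + (b - c.im)^2)⁻¹)^n := by rw [norm_sq_ofReal_add_mul_I_sub]
    have hbnd : ∀ a : ℝ, (((a - c.re)^2 + (b - c.im)^2)⁻¹)^n
        ≤ ((((-c.im)^2)⁻¹)^m) * ((a - c.re)^2 + (-c.im)^2)⁻¹ := by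
      intro a
      have h2 : ((-c.im)^2 : ℝ) ≤ (a - c.re)^2 + (b - c.im)^2 := by
        nlinarith [sq_nonneg (a - c.re)]
      have h3 : ((a - c.re)^2 + (-c.im)^2 : ℝ) ≤ (a - c.re)^2 + (b - c.im)^2 := by nlinarith
      have h4 := pow_inv_le (show (0:ℝ) < (-c.im)^2 by positivity) h2 m
      rw [hm]
      calc (((a - c.re)^2 + (b - c.im)^2)⁻¹)^(m+1)
          ≤ (((-c.im)^2)⁻¹)^m * ((a - c.re)^2 + (b - c.im)^2)⁻¹ := h4
        _ ≤ (((-c.im)^2)⁻¹)^m * ((a - c.re)^2 + (-c.im)^2)⁻¹ := by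
            have h5 := inv_anti₀ (show (0:ℝ) < (a - c.re)^2 + (-c.im)^2 by positivity) h3
            exact mul_le_mul_of_nonneg_left h5 (by positivity)
    calc ∫ a : ℝ, ‖(((a:ℂ) + (b:ℂ)*I - c)⁻¹)^n‖^2
        ≤ ∫ a : ℝ, ((((-c.im)^2)⁻¹)^m) * ((a - c.re)^2 + (-c.im)^2)⁻¹ := by
          refine integral_mono_of_nonneg (Filter.Eventually.of_forall fun a => by positivity)
            ((integrable_kern hv c.re).const_mul _) (Filter.Eventually.of_forall fun a => ?_)
          dsimp only
          rw [hpt a]; exact hbnd a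
      _ = ((((-c.im)^2)⁻¹)^m) * (π / -c.im) := by
          rw [MeasureTheory.integral_const_mul, integral_kern hv c.re]
  · have heq : (fun b : ℝ => ∫ a : ℝ, ‖(((a:ℂ) + (b:ℂ)*I - c)⁻¹)^n
        - ((memLp_gfun hn hc).toLp (gfun c n) : ℝ → ℂ) a‖^2)
        = fun b : ℝ => ∫ a : ℝ, ‖(((a:ℂ) + (b:ℂ)*I - c)⁻¹)^n - gfun c n a‖^2 := by
      funext b
      refine integral_congr_ae ?_
      filter_upwards [(memLp_gfun hn hc).coeFn_toLp] with a ha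
      rw [ha]
    have hupper : ∀ b : ℝ, 0 < b →
        (∫ a : ℝ, ‖(((a:ℂ) + (b:ℂ)*I - c)⁻¹)^n - gfun c n a‖^2)
        ≤ ((n:ℝ)^2 * ((((-c.im)^2)⁻¹)^n * (π / -c.im))) * b^2 := by
      intro b hb
      have hptb : ∀ a : ℝ, ‖(((a:ℂ) + (b:ℂ)*I - c)⁻¹)^n - gfun c n a‖^2
          ≤ ((n:ℝ)^2 * b^2 * (((-c.im)^2)⁻¹)^n) * ((a - c.re)^2 + (-c.im)^2)⁻¹ := by
        intro a
        set A : ℂ := (a:ℂ) + (b:ℂ)*I - c with hA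
        set B : ℂ := (a:ℂ) - c with hB
        have hBsq : ‖B‖^2 = (a - c.re)^2 + (-c.im)^2 := by
          rw [hB, norm_sq_ofReal_sub]; ring
        have hAsq : ‖A‖^2 = (a - c.re)^2 + (b - c.im)^2 := by
          rw [hA, norm_sq_ofReal_add_mul_I_sub]
        have hBpos : (0:ℝ) < ‖B‖^2 := by rw [hBsq]; positivity
        have hABle : ‖B‖ ≤ ‖A‖ := by
          have hsq : ‖B‖^2 ≤ ‖A‖^2 := by rw [hBsq, hAsq]; nlinarith
          nlinarith [norm_nonneg A, norm_nonneg B]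
        have hBne : B ≠ 0 := by
          intro h0
          rw [h0] at hBpos
          simp at hBpos
        have hd := inv_pow_sub_bound n hABle hBne
        have hABd : A - B = (b:ℂ) * I := by rw [hA, hB]; ring
        have hABn : ‖A - B‖ = b := by
          rw [hABd, norm_mul, Complex.norm_I, Complex.norm_real, Real.norm_eq_abs,
            abs_of_pos hb, mul_one]
        have hgf : gfun c n a = B⁻¹^n := by rw [gfun, hB, inv_pow]
        have hd2 : ‖A⁻¹^n - B⁻¹^n‖ ≤ (n:ℝ) * b * (‖B‖⁻¹)^(n+1) := by
          rw [← hABn]; exact hd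
        have hd3 : ‖A⁻¹^n - B⁻¹^n‖^2 ≤ ((n:ℝ) * b * (‖B‖⁻¹)^(n+1))^2 :=
          pow_le_pow_left₀ (norm_nonneg _) hd2 2
        have hrhs : ((n:ℝ) * b * (‖B‖⁻¹)^(n+1))^2
            = (n:ℝ)^2 * b^2 * ((‖B‖^2)⁻¹)^(n+1) := by
          rw [mul_pow, mul_pow, ← pow_mul, mul_comm (n+1) 2, pow_mul, inv_pow]
        have hple : ((‖B‖^2)⁻¹)^(n+1) ≤ (((-c.im)^2)⁻¹)^n * (‖B‖^2)⁻¹ := by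
          refine pow_inv_le (by positivity) ?_ n
          rw [hBsq]; nlinarith [sq_nonneg (a - c.re)]
        have hfin : ‖A⁻¹^n - B⁻¹^n‖^2
            ≤ (n:ℝ)^2 * b^2 * ((((-c.im)^2)⁻¹)^n * (‖B‖^2)⁻¹) := by
          rw [hrhs] at hd3
          refine le_trans hd3 ?_
          exact mul_le_mul_of_nonneg_left hple (by positivity)
        rw [hgf]
        calc ‖A⁻¹^n - B⁻¹^n‖^2 ≤ (n:ℝ)^2 * b^2 * ((((-c.im)^2)⁻¹)^n * (‖B‖^2)⁻¹) := hfin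
          _ = ((n:ℝ)^2 * b^2 * (((-c.im)^2)⁻¹)^n) * ((a - c.re)^2 + (-c.im)^2)⁻¹ := by
              rw [hBsq]; ring
      calc (∫ a : ℝ, ‖(((a:ℂ) + (b:ℂ)*I - c)⁻¹)^n - gfun c n a‖^2)
          ≤ ∫ a : ℝ, ((n:ℝ)^2 * b^2 * (((-c.im)^2)⁻¹)^n) * ((a - c.re)^2 + (-c.im)^2)⁻¹ := by
            refine integral_mono_of_nonneg (Filter.Eventually.of_forall fun a => by positivity)
              ((integrable_kern hv c.re).const_mul _) (Filter.Eventually.of_forall fun a => ?_)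
            dsimp only
            exact hptb a
        _ = ((n:ℝ)^2 * ((((-c.im)^2)⁻¹)^n * (π / -c.im))) * b^2 := by
            rw [MeasureTheory.integral_const_mul, integral_kern hv c.re]; ring
    rw [heq]
    set K : ℝ := (n:ℝ)^2 * ((((-c.im)^2)⁻¹)^n * (π / -c.im)) with hK
    have hKt : Tendsto (fun b : ℝ => K * b^2) (nhdsWithin 0 (Ioi 0)) (nhds 0) := by
      have h1 : Tendsto (fun b : ℝ => K * b^2) (nhds 0) (nhds (K * 0^2)) :=
        (continuous_const.mul (continuous_pow 2)).tendsto 0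
      have h2 : K * 0^2 = 0 := by ring
      rw [h2] at h1
      exact h1.mono_left nhdsWithin_le_nhds
    refine tendsto_of_tendsto_of_tendsto_of_le_of_le' tendsto_const_nhds hKt ?_ ?_
    · exact eventually_nhdsWithin_of_forall fun b hb =>
        integral_nonneg fun a => by positivity
    · exact eventually_nhdsWithin_of_forall fun b hb => hupper b hb

/-- `posSuppSet` as a submodule. -/
def posP : Submodule ℂ Hsp where
  carrier := posSuppSet
  add_mem' := by
    intro a b ha hb
    filter_upwards [ha, hb, Lp.coeFn_add a b] with x h1 h2 h3 hx0
    rw [h3, Pi.add_apply, h1 hx0, h2 hx0, add_zero]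
  zero_mem' := by
    filter_upwards [Lp.coeFn_zero ℂ 2 (volume : Measure ℝ)] with x hx _
    rw [hx]; rfl
  smul_mem' := by
    intro r a ha
    filter_upwards [ha, Lp.coeFn_smul r a] with x h1 h2 hx0
    rw [h2, Pi.smul_apply, h1 hx0, smul_zero]

set_option synthInstance.maxHeartbeats 1000000 in
lemma isClosed_posP : IsClosed (posP : Set Hsp) := by
  refine IsSeqClosed.isClosed ?_
  intro f g hf hfg
  have htend : Tendsto (fun n => eLpNorm (⇑(f n) - ⇑g) 2 (volume : Measure ℝ)) atTop (nhds 0) :=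
    (Lp.tendsto_Lp_iff_tendsto_eLpNorm' f g).mp hfg
  have him : TendstoInMeasure (volume : Measure ℝ) (fun n => ⇑(f n)) atTop ⇑g :=
    tendstoInMeasure_of_tendsto_eLpNorm (by norm_num [ENNReal.inv_two_add_inv_two])
      (fun n => Lp.aestronglyMeasurable (f n)) (Lp.aestronglyMeasurable g) htend
  obtain ⟨ns, -, hae⟩ := him.exists_seq_tendsto_ae
  have hall : ∀ᵐ x : ℝ, ∀ k : ℕ, x ≤ 0 → (f (ns k)) x = 0 :=
    MeasureTheory.ae_all_iff.mpr fun k => hf (ns k)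
  filter_upwards [hae, hall] with x hx hxall hx0
  have h0 : Tendsto (fun _ : ℕ => (0:ℂ)) atTop (nhds (g x)) :=
    Tendsto.congr (fun k => hxall k hx0) hx
  exact tendsto_nhds_unique h0 tendsto_const_nhds

lemma posSupp_ae {f : Hsp} (hf : f ∈ posSupp) : ∀ᵐ x : ℝ, x ≤ 0 → f x = 0 := by
  have hle : posSupp ≤ posP :=
    Submodule.topologicalClosure_minimal _
      (Submodule.span_le.mpr (fun g hg => hg)) isClosed_posP
  exact hle hf

lemma ortho_of_Msub_eq_zero {f : posSupp} (h : Msub f = 0) :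
    ∀ g ∈ hardySet, (inner ℂ g ((f : Hsp)) : ℂ) = 0 := by
  set u : Hsp := (f : Hsp) with hu
  have hp : (inner ℂ (Pplus u) u : ℂ) = 0 := by
    have h1 : (inner ℂ (Msub f) f : ℂ) = 0 := by rw [h, inner_zero_left]
    have h2 : (inner ℂ ((Submodule.orthogonalProjectionOnto posSupp (Pplus u) : Hsp)) u : ℂ) = 0 := by
      rw [← Submodule.coe_inner]
      exact h1
    have h3 : Pplus u - ↑(Submodule.orthogonalProjectionOnto posSupp (Pplus u)) ∈ posSuppᗮ :=
      Submodule.sub_starProjection_mem_orthogonal _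
    have h4 : (inner ℂ (Pplus u - ↑(Submodule.orthogonalProjectionOnto posSupp (Pplus u))) u : ℂ) = 0 :=
      (Submodule.mem_orthogonal' posSupp _).mp h3 u f.2
    have h5 := inner_sub_left (𝕜 := ℂ) (Pplus u) (↑(Submodule.orthogonalProjectionOnto posSupp (Pplus u))) u
    rw [h4, h2, sub_zero] at h5
    exact h5.symm
  set p : Hsp := ↑(Submodule.orthogonalProjectionOnto hardySubmodule u) with hpdef
  have hPp : Pplus u = p := rfl
  rw [hPp] at hp
  have h5 : u - p ∈ hardySubmoduleᗮ := Submodule.sub_starProjection_mem_orthogonal u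
  have h6 : (inner ℂ p (u - p) : ℂ) = 0 :=
    (Submodule.mem_orthogonal _ _).mp h5 p (Submodule.orthogonalProjectionOnto hardySubmodule u).2
  have h7 : (inner ℂ p p : ℂ) = 0 := by
    have h8 : (inner ℂ p u : ℂ) = inner ℂ p p + inner ℂ p (u - p) := by
      rw [← inner_add_right, add_sub_cancel]
    rw [hp, h6, add_zero] at h8
    exact h8.symm
  have hp0 : p = 0 := inner_self_eq_zero.mp h7
  have hmem : u ∈ hardySubmoduleᗮ := by
    refine Submodule.orthogonalProjectionOnto_eq_zero_iff.mp ?_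
    exact Submodule.coe_eq_zero.mp hp0
  intro g hg
  have hgmem : g ∈ hardySubmodule :=
    Submodule.le_topologicalClosure _ (Submodule.subset_span hg)
  exact (Submodule.mem_orthogonal _ _).mp hmem g hgmem

lemma memLp_wind {n : ℕ} (hn : 1 ≤ n) :
    MemLp (Set.indicator (Ioi (0:ℝ)) (fun x => ((x+1:ℝ)⁻¹)^n)) 2 (volume : Measure ℝ) := by
  have hmeas : Measurable (Set.indicator (Ioi (0:ℝ)) (fun x => ((x+1:ℝ)⁻¹)^n)) :=
    Measurable.indicator (((measurable_id.add_const 1)).inv.pow_const n) measurableSet_Ioi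
  rw [memLp_two_iff_integrable_sq_norm hmeas.aestronglyMeasurable]
  refine Integrable.mono' ((integrable_kern one_pos (-1)).const_mul 2)
    ((hmeas.norm.pow_const 2).aestronglyMeasurable)
    (Filter.Eventually.of_forall fun x => ?_)
  simp only [Real.norm_eq_abs, abs_pow, abs_abs, sq_abs]
  by_cases hx : x ∈ Ioi (0:ℝ)
  · rw [Set.indicator_of_mem hx]
    have hx0 : (0:ℝ) < x := hx
    have hp : (0:ℝ) ≤ (x+1:ℝ)⁻¹ := inv_nonneg.mpr (by linarith)
    have e1 : |(x+1:ℝ)⁻¹ ^ n| = (x+1:ℝ)⁻¹ ^ n := abs_of_nonneg (pow_nonneg hp n)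
    have e2 : |((x+1:ℝ)⁻¹ ^ n)^2| = ((x+1:ℝ)⁻¹ ^ n)^2 := abs_of_nonneg (sq_nonneg _)
    have h1 : (1:ℝ) < x + 1 := by
      have : (0:ℝ) < x := hx
      linarith
    have h2 : ((x+1:ℝ)⁻¹)^n ≤ (x+1:ℝ)⁻¹ := by
      refine pow_le_of_le_one (by positivity) ?_ (by omega)
      rw [inv_le_one_iff₀]
      right; linarith
    have h4 : (0:ℝ) < (x+1)^2 := by positivity
    have h5 : (0:ℝ) < (x+1)^2 + 1 := by positivity
    have h3 : ((x+1:ℝ)⁻¹)^2 ≤ 2 * ((x - (-1))^2 + 1^2)⁻¹ := by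
      have he : (x - (-1))^2 + 1^2 = (x+1)^2 + 1 := by ring
      rw [he, inv_pow, inv_eq_one_div, show 2 * ((x+1)^2+1)⁻¹ = 2/((x+1)^2+1) by ring,
        div_le_div_iff₀ h4 h5]
      nlinarith
    calc (((x+1:ℝ)⁻¹)^n)^2 ≤ ((x+1:ℝ)⁻¹)^2 := by
          refine pow_le_pow_left₀ (by positivity) h2 2
      _ ≤ 2 * ((x - (-1))^2 + 1^2)⁻¹ := h3
  · rw [Set.indicator_of_notMem hx]
    simp
    positivity

lemma moment_delta {f : posSupp} (h : ∀ g ∈ hardySet, (inner ℂ g ((f : Hsp)) : ℂ) = 0)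
    {n : ℕ} (hn : 1 ≤ n) {δ : ℝ} (hδ : 0 < δ) :
    ∫ x : ℝ, (((x:ℂ) + 1 - (δ:ℂ) * I)⁻¹)^n * (f : Hsp) x = 0 := by
  have hc : ((-1 : ℂ) - (δ:ℂ) * I).im < 0 := by simpa using hδ
  have h0 := h _ (toLp_gfun_mem_hardySet hn hc)
  rw [MeasureTheory.L2.inner_def] at h0
  calc ∫ x : ℝ, (((x:ℂ) + 1 - (δ:ℂ) * I)⁻¹)^n * (f : Hsp) x
      = ∫ a : ℝ, (inner ℂ (((memLp_gfun hn hc).toLp (gfun (-1 - (δ:ℂ) * I) n)) a)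
          ((f : Hsp) a) : ℂ) := by
        refine integral_congr_ae ?_
        filter_upwards [(memLp_gfun hn hc).coeFn_toLp] with x hx
        rw [hx, RCLike.inner_apply', gfun]
        congr 1
        rw [map_pow, map_inv₀, map_sub, Complex.conj_ofReal]
        congr 2
        simp [Complex.ext_iff]
    _ = 0 := h0

lemma ae_ne_neg_one : ∀ᵐ x : ℝ, x ≠ (-1:ℝ) := by
  rw [ae_iff]
  have : {x : ℝ | ¬ x ≠ -1} = {(-1:ℝ)} := by
    ext x; simp
  rw [this]
  exact Real.volume_singleton

lemma moment_limit {f : posSupp} (h : ∀ g ∈ hardySet, (inner ℂ g ((f : Hsp)) : ℂ) = 0)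
    {n : ℕ} (hn : 1 ≤ n) :
    ∫ x : ℝ, (((x:ℂ) + 1)⁻¹)^n * (f : Hsp) x = 0 := by
  have hsupp := posSupp_ae f.2
  set w : ℝ → ℝ := Set.indicator (Ioi (0:ℝ)) (fun x => ((x+1:ℝ)⁻¹)^n) with hw
  have hbound : Integrable (fun x : ℝ => w x * ‖(f:Hsp) x‖) := by
    have h1 : MemLp (fun x : ℝ => ‖(f:Hsp) x‖) 2 (volume : Measure ℝ) :=
      (Lp.memLp (f:Hsp)).norm
    have h2 : MemLp (w • fun x : ℝ => ‖(f:Hsp) x‖) 1 (volume : Measure ℝ) :=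
      h1.smul (memLp_wind hn)
    exact memLp_one_iff_integrable.mp h2
  have hlim : Tendsto (fun δ : ℝ => ∫ x : ℝ, (((x:ℂ) + 1 - (δ:ℂ)*I)⁻¹)^n * (f:Hsp) x)
      (nhdsWithin 0 (Ioi 0)) (nhds (∫ x : ℝ, (((x:ℂ) + 1)⁻¹)^n * (f:Hsp) x)) := by
    refine tendsto_integral_filter_of_dominated_convergence
      (fun x : ℝ => w x * ‖(f:Hsp) x‖) ?_ ?_ hbound ?_
    · refine Filter.eventually_iff_exists_mem.mpr ⟨Ioi 0, self_mem_nhdsWithin, fun δ hδ => ?_⟩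
      have hδ0 : (0:ℝ) < δ := hδ
      have hcm : Continuous fun x : ℝ => (((x:ℂ) + 1 - (δ:ℂ)*I)⁻¹)^n := by
        refine (Continuous.inv₀ (by continuity) fun x => ?_).pow n
        intro h0
        have := congrArg Complex.im h0
        simp at this
        linarith
      exact (hcm.aestronglyMeasurable).mul (Lp.aestronglyMeasurable _)
    · refine Filter.eventually_iff_exists_mem.mpr ⟨Ioi 0, self_mem_nhdsWithin, fun δ hδ => ?_⟩
      have hδ0 : (0:ℝ) < δ := hδ
      filter_upwards [hsupp] with x hx
      rcases lt_or_ge 0 x with h0 | h0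
      · have hwx : w x = ((x+1:ℝ)⁻¹)^n := Set.indicator_of_mem h0 _
        rw [norm_mul, norm_pow, norm_inv, hwx]
        refine mul_le_mul_of_nonneg_right ?_ (norm_nonneg _)
        refine pow_le_pow_left₀ (by positivity) ?_ n
        refine inv_anti₀ (by linarith) ?_
        have hre : ((x:ℂ) + 1 - (δ:ℂ)*I).re = x + 1 := by simp
        calc x + 1 ≤ |((x:ℂ) + 1 - (δ:ℂ)*I).re| := by rw [hre]; exact le_abs_self _
          _ ≤ ‖(x:ℂ) + 1 - (δ:ℂ)*I‖ := Complex.abs_re_le_norm _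
      · rw [hx h0, mul_zero, norm_zero]
        simp
    · filter_upwards [ae_ne_neg_one] with x hx
      have hx1 : ((x:ℂ) + 1) ≠ 0 := by
        intro h0
        apply hx
        have := congrArg Complex.re h0
        simp at this
        linarith
      have hco : Continuous fun δ : ℝ => (x:ℂ) + 1 - (δ:ℂ)*I := by continuity
      have h1 : Tendsto (fun δ : ℝ => (x:ℂ) + 1 - (δ:ℂ)*I) (nhds 0) (nhds ((x:ℂ)+1)) := by
        have h2 := hco.tendsto 0
        simpa using h2
      have h3 : Tendsto (fun δ : ℝ => (((x:ℂ) + 1 - (δ:ℂ)*I)⁻¹)^n * (f:Hsp) x)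
          (nhds 0) (nhds ((((x:ℂ) + 1)⁻¹)^n * (f:Hsp) x)) :=
        (((h1.inv₀ hx1).pow n).mul_const _)
      exact h3.mono_left nhdsWithin_le_nhds
  have hzero : (fun δ : ℝ => ∫ x : ℝ, (((x:ℂ) + 1 - (δ:ℂ)*I)⁻¹)^n * (f:Hsp) x)
      =ᶠ[nhdsWithin 0 (Ioi 0)] (fun _ => (0:ℂ)) :=
    Filter.eventually_iff_exists_mem.mpr
      ⟨Ioi 0, self_mem_nhdsWithin, fun δ hδ => moment_delta h hn hδ⟩
  exact tendsto_nhds_unique (hlim.congr' hzero) tendsto_const_nhds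

lemma f_eq_zero {f : posSupp}
    (h : ∀ n : ℕ, 1 ≤ n → ∫ x : ℝ, (((x:ℂ) + 1)⁻¹)^n * (f : Hsp) x = 0) :
    f = 0 := by
  have hsupp := posSupp_ae f.2
  set φ : ℝ → ℂ :=
    Set.indicator (Ioi (0:ℝ)) (fun x => (((x:ℂ)+1)⁻¹)^2 * (f:Hsp) x) with hφdef
  have hφmeas : AEStronglyMeasurable φ (volume : Measure ℝ) := by
    refine AEStronglyMeasurable.indicator ?_ measurableSet_Ioi
    refine AEStronglyMeasurable.mul ?_ (Lp.aestronglyMeasurable _)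
    refine Measurable.aestronglyMeasurable ?_
    exact ((Complex.measurable_ofReal.add_const 1).inv.pow_const 2)
  have hφint : Integrable φ (volume : Measure ℝ) := by
    have h1 : MemLp (fun x : ℝ => ((Set.indicator (Ioi (0:ℝ))
        (fun x => ((x+1:ℝ)⁻¹)^2) x : ℝ) : ℂ)) 2 (volume : Measure ℝ) :=
      (memLp_wind (by norm_num [ENNReal.inv_two_add_inv_two])).ofReal
    have h2 : MemLp ((fun x : ℝ => ((Set.indicator (Ioi (0:ℝ))
        (fun x => ((x+1:ℝ)⁻¹)^2) x : ℝ) : ℂ)) • (⇑(f:Hsp))) 1 (volume : Measure ℝ) :=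
      (Lp.memLp (f:Hsp)).smul h1
    refine (memLp_one_iff_integrable.mp h2).congr (Filter.Eventually.of_forall fun x => ?_)
    simp only [Pi.smul_apply', smul_eq_mul]
    by_cases hx : x ∈ Ioi (0:ℝ)
    · rw [hφdef, Set.indicator_of_mem hx, Set.indicator_of_mem hx]
      have hne : (x + 1 : ℝ) ≠ 0 := by
        have : (0:ℝ) < x := hx
        intro h0; linarith
      push_cast
      ring
    · rw [hφdef, Set.indicator_of_notMem hx, Set.indicator_of_notMem hx]
      simp
  have hmom : ∀ k : ℕ, ∫ x : ℝ, ((x+1:ℝ)⁻¹)^k • φ x = 0 := by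
    intro k
    have heq : ∀ᵐ x : ℝ, ((x+1:ℝ)⁻¹)^k • φ x = (((x:ℂ) + 1)⁻¹)^(k+2) * (f:Hsp) x := by
      filter_upwards [hsupp] with x hx
      rcases lt_or_ge 0 x with h0 | h0
      · rw [hφdef, Set.indicator_of_mem (Set.mem_Ioi.mpr h0)]
        have hne : (x + 1 : ℝ) ≠ 0 := by intro h1; linarith
        rw [Complex.real_smul]
        push_cast
        ring
      · rw [hφdef, Set.indicator_of_notMem (by simpa using h0), hx h0]
        simp
    rw [integral_congr_ae heq]
    exact h (k+2) (by omega)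
  have hint_pow : ∀ k : ℕ, Integrable (fun x : ℝ => ((x+1:ℝ)⁻¹)^k • φ x) := by
    intro k
    refine Integrable.mono' hφint.norm ?_ (Filter.Eventually.of_forall fun x => ?_)
    · refine AEStronglyMeasurable.smul (f := fun x : ℝ => ((x+1:ℝ)⁻¹)^k) ?_ hφmeas
      exact (((measurable_id.add_const 1)).inv.pow_const k).aestronglyMeasurable
    · rw [norm_smul]
      by_cases hx : x ∈ Ioi (0:ℝ)
      · have h0 : (0:ℝ) < x := hx
        have h1 : ((x+1:ℝ)⁻¹)^k ≤ 1 := by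
          refine pow_le_one₀ (by positivity) ?_
          rw [inv_le_one_iff₀]; right; linarith
        have h2 : (0:ℝ) ≤ ((x+1:ℝ)⁻¹)^k := by positivity
        calc ‖((x+1:ℝ)⁻¹)^k‖ * ‖φ x‖ = ((x+1:ℝ)⁻¹)^k * ‖φ x‖ := by
              rw [Real.norm_of_nonneg h2]
          _ ≤ 1 * ‖φ x‖ := mul_le_mul_of_nonneg_right h1 (norm_nonneg _)
          _ = ‖φ x‖ := one_mul _
      · have hφ0 : φ x = 0 := by rw [hφdef]; exact Set.indicator_of_notMem hx _
        rw [hφ0, norm_zero, mul_zero]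
  have hpoly : ∀ p : Polynomial ℝ, ∫ x : ℝ, (p.eval ((x+1:ℝ)⁻¹)) • φ x = 0 := by
    intro p
    have heq : ∀ x : ℝ, (p.eval ((x+1:ℝ)⁻¹)) • φ x
        = ∑ i ∈ Finset.range (p.natDegree+1), p.coeff i • (((x+1:ℝ)⁻¹)^i • φ x) := by
      intro x
      rw [Polynomial.eval_eq_sum_range, Finset.sum_smul]
      refine Finset.sum_congr rfl fun i _ => ?_
      rw [mul_smul]
    simp_rw [heq]
    rw [integral_finset_sum (f := fun i (x : ℝ) => p.coeff i • (((x+1:ℝ)⁻¹)^i • φ x)) _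
      (fun i _ => by exact (hint_pow i).smul (p.coeff i))]
    refine Finset.sum_eq_zero fun i _ => ?_
    have := integral_smul (μ := (volume : Measure ℝ)) (p.coeff i)
      (fun x : ℝ => ((x+1:ℝ)⁻¹)^i • φ x)
    rw [this, hmom i, smul_zero]
  have htest : ∀ g : ℝ → ℝ, ContDiff ℝ ((⊤ : ℕ∞)) g → HasCompactSupport g →
      ∫ x : ℝ, g x • φ x = 0 := by
    intro g hg hgsupp
    have hgcont : Continuous g := hg.continuous
    -- bound for g
    obtain ⟨R, hR⟩ := hgsupp.isBounded.subset_closedBall 0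
    have hgz : ∀ y : ℝ, R < |y| → g y = 0 := by
      intro y hy
      refine image_eq_zero_of_notMem_tsupport fun hmem => ?_
      have := hR hmem
      rw [Metric.mem_closedBall, Real.dist_eq, sub_zero] at this
      linarith
    -- the transported function
    set S : ℝ := max R 1 with hS
    set G : ℝ → ℝ := fun s => if 0 < s then g (1/s - 1) else 0 with hG
    have hGcont : ContinuousOn G (Icc (0:ℝ) 1) := by
      intro s hs
      rcases eq_or_lt_of_le hs.1 with h0 | h0
      · -- s = 0
        have hev : G =ᶠ[nhds (0:ℝ)] (fun _ => (0:ℝ)) := by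
          have hmem : Metric.ball (0:ℝ) (1+S)⁻¹ ∈ nhds (0:ℝ) :=
            Metric.ball_mem_nhds _ (by positivity)
          filter_upwards [hmem] with t ht
          rw [Metric.mem_ball, Real.dist_eq, sub_zero] at ht
          rw [hG]
          by_cases htpos : 0 < t
          · simp only [if_pos htpos]
            refine hgz _ ?_
            have h1 : t < (1+S)⁻¹ := lt_of_le_of_lt (le_abs_self t) ht
            have h2 : (1:ℝ) + S < 1/t := by
              rw [lt_div_iff₀ htpos]
              calc (1+S) * t < (1+S) * (1+S)⁻¹ := by
                    refine mul_lt_mul_of_pos_left h1 (by positivity)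
                _ = 1 := by
                    refine mul_inv_cancel₀ (by positivity)
            have h3 : S < 1/t - 1 := by linarith
            have h4 : R ≤ S := le_max_left _ _
            have h5 : (0:ℝ) < 1/t - 1 := by
              have : (1:ℝ) ≤ S := le_max_right _ _
              linarith
            rw [abs_of_pos h5]
            linarith
          · simp only [if_neg htpos]
        have hca : ContinuousAt G 0 := continuousAt_const.congr hev.symm
        rw [← h0]
        exact hca.continuousWithinAt
      · -- 0 < s
        have hev : (fun t : ℝ => g (1/t - 1)) =ᶠ[nhds s] G := by
          have hmem : Ioi (0:ℝ) ∈ nhds s := isOpen_Ioi.mem_nhds h0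
          filter_upwards [hmem] with t ht
          rw [hG]
          simp only [if_pos (show (0:ℝ) < t from ht)]
        have hca : ContinuousAt (fun t : ℝ => g (1/t - 1)) s := by
          refine hgcont.continuousAt.comp ?_
          refine ContinuousAt.sub ?_ continuousAt_const
          exact (continuousAt_const.div continuousAt_id (ne_of_gt h0))
        exact (hca.congr hev).continuousWithinAt
    -- main estimate
    have hM : (0:ℝ) ≤ ∫ x : ℝ, ‖φ x‖ := integral_nonneg fun x => norm_nonneg _
    set M : ℝ := ∫ x : ℝ, ‖φ x‖ with hM0
    have hkey : ∀ ε : ℝ, 0 < ε → ‖∫ x : ℝ, g x • φ x‖ ≤ 0 + ε := by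
      intro ε hε
      set ε' : ℝ := ε / (M + 1) with hε'
      have hε'pos : 0 < ε' := by
        rw [hε']
        positivity
      obtain ⟨p, hp⟩ := exists_polynomial_near_of_continuousOn 0 1 G hGcont ε' hε'pos
      have hgcomp : ∀ x : ℝ, 0 < x → g x = G ((x+1:ℝ)⁻¹) := by
        intro x hx
        rw [hG]
        have h1 : (0:ℝ) < (x+1)⁻¹ := by positivity
        simp only [if_pos h1]
        congr 1
        rw [one_div, inv_inv]
        ring
      have hdiff : ∀ᵐ x : ℝ, ‖g x • φ x - (p.eval ((x+1:ℝ)⁻¹)) • φ x‖ ≤ ε' * ‖φ x‖ := by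
        refine Filter.Eventually.of_forall fun x => ?_
        by_cases hx : x ∈ Ioi (0:ℝ)
        · have h0 : (0:ℝ) < x := hx
          have hr1 : ((x+1:ℝ)⁻¹) ∈ Icc (0:ℝ) 1 := by
            constructor
            · positivity
            · rw [inv_le_one_iff₀]; right; linarith
          have h2 := hp _ hr1
          rw [← sub_smul, norm_smul, Real.norm_eq_abs]
          refine mul_le_mul_of_nonneg_right ?_ (norm_nonneg _)
          rw [hgcomp x h0]
          rw [abs_sub_comm]
          exact le_of_lt h2
        · have hφ0 : φ x = 0 := by rw [hφdef]; exact Set.indicator_of_notMem hx _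
          rw [hφ0, smul_zero, smul_zero, sub_zero, norm_zero]
          positivity
      have hgint : Integrable (fun x : ℝ => g x • φ x) := by
        obtain ⟨Cg, hCg⟩ := hgcont.bounded_above_of_compact_support hgsupp
        refine Integrable.mono' (hφint.norm.const_mul Cg)
          ((hgcont.aestronglyMeasurable).smul hφmeas)
          (Filter.Eventually.of_forall fun x => ?_)
        rw [norm_smul]
        exact mul_le_mul_of_nonneg_right (hCg x) (norm_nonneg _)
      have hpint : Integrable (fun x : ℝ => (p.eval ((x+1:ℝ)⁻¹)) • φ x) := by
        obtain ⟨Cp, hCp⟩ := (isCompact_Icc : IsCompact (Icc (0:ℝ) 1)).exists_bound_of_continuousOn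
          (Polynomial.continuous p).continuousOn
        refine Integrable.mono' (hφint.norm.const_mul Cp) ?_
          (Filter.Eventually.of_forall fun x => ?_)
        · refine AEStronglyMeasurable.smul (f := fun x : ℝ => p.eval ((x+1:ℝ)⁻¹)) ?_ hφmeas
          exact ((Polynomial.continuous p).measurable.comp
            ((measurable_id.add_const 1)).inv).aestronglyMeasurable
        · rw [norm_smul]
          by_cases hx : x ∈ Ioi (0:ℝ)
          · have h0 : (0:ℝ) < x := hx
            have hr1 : ((x+1:ℝ)⁻¹) ∈ Icc (0:ℝ) 1 := by
              constructor
              · exact inv_nonneg.mpr (by linarith)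
              · rw [inv_le_one_iff₀]; right; linarith
            exact mul_le_mul_of_nonneg_right (hCp _ hr1) (norm_nonneg _)
          · have hφ0 : φ x = 0 := by rw [hφdef]; exact Set.indicator_of_notMem hx _
            rw [hφ0, norm_zero, mul_zero, mul_zero]
      have hsplit : (∫ x : ℝ, g x • φ x)
          = ∫ x : ℝ, (g x • φ x - (p.eval ((x+1:ℝ)⁻¹)) • φ x) := by
        rw [integral_sub hgint hpint, hpoly p, sub_zero]
      rw [hsplit]
      calc ‖∫ x : ℝ, (g x • φ x - (p.eval ((x+1:ℝ)⁻¹)) • φ x)‖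
          ≤ ∫ x : ℝ, ‖g x • φ x - (p.eval ((x+1:ℝ)⁻¹)) • φ x‖ :=
            norm_integral_le_integral_norm _
        _ ≤ ∫ x : ℝ, ε' * ‖φ x‖ := by
            refine integral_mono_of_nonneg
              (Filter.Eventually.of_forall fun x => norm_nonneg _)
              (hφint.norm.const_mul ε') hdiff
        _ = ε' * M := by rw [MeasureTheory.integral_const_mul]
        _ ≤ ε := by
            rw [hε']
            rw [div_mul_eq_mul_div, div_le_iff₀ (by positivity)]
            nlinarith
        _ = 0 + ε := by ring
    have : ‖∫ x : ℝ, g x • φ x‖ ≤ 0 := le_of_forall_pos_le_add hkey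
    have h0 : ‖∫ x : ℝ, g x • φ x‖ = 0 := le_antisymm this (norm_nonneg _)
    exact norm_eq_zero.mp h0
  have hφ0 : ∀ᵐ x : ℝ, φ x = 0 :=
    ae_eq_zero_of_integral_contDiff_smul_eq_zero hφint.locallyIntegrable htest
  have hf0 : (⇑(f:Hsp)) =ᶠ[ae (volume : Measure ℝ)] 0 := by
    filter_upwards [hφ0, hsupp] with x h1 h2
    rcases le_or_gt x 0 with hx | hx
    · exact h2 hx
    · have h3 : φ x = (((x:ℂ)+1)⁻¹)^2 * (f:Hsp) x := by
        rw [hφdef]; exact Set.indicator_of_mem (Set.mem_Ioi.mpr hx) _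
      rw [h3] at h1
      rcases mul_eq_zero.mp h1 with h4 | h4
      · exfalso
        have hne : ((x:ℂ) + 1) ≠ 0 := by
          intro h5
          have := congrArg Complex.re h5
          simp at this
          linarith
        exact (pow_ne_zero 2 (inv_ne_zero hne)) h4
      · exact h4
  have hcoe : (f : Hsp) = 0 := Lp.eq_zero_iff_ae_eq_zero.mpr hf0
  exact Submodule.coe_eq_zero.mp hcoe

end LyapAux

/-- The operator `M = (P_{ℝ⁺} P₊ P_{ℝ⁺})|_{L²(ℝ⁺;ℂ)}` is injective on `L²(ℝ⁺; ℂ)`. -/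
theorem stmt4 : Function.Injective (⇑Msub) := by
  intro a b hab
  have hz : Msub (a - b) = 0 := by rw [map_sub, hab, sub_self]
  have h0 : a - b = 0 := by
    have horth := LyapAux.ortho_of_Msub_eq_zero hz
    exact LyapAux.f_eq_zero (fun n hn => LyapAux.moment_limit horth hn)
  exact sub_eq_zero.mp h0

end
end

section
/- For E, E' > 0 with E ≠ E', the spectral reconstruction identity holds: (1/(4π²)) (E E')^{-1/2} · ∫_0^1 (m/(1-m))^{(i/(2π)) ln(E/E')} · (1-m)^{-1} dm (in the regularized limit sense of the beta function) equals -(1/(2πi)) · 1/(E - E'). -/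
open MeasureTheory Complex Filter Set
open scoped Real ComplexOrder

noncomputable section

/-- The analytically continued Euler beta function `B(x,y) = Γ(x)Γ(y)/Γ(x+y)`. -/
def Bc (x y : ℂ) : ℂ := Complex.Gamma x * Complex.Gamma y / Complex.Gamma (x + y)

/-- Spectral reconstruction: for `E, E' > 0`, `E ≠ E'`,
`(1/(4π²)) (E E')^{-1/2} ∫₀¹ (m/(1-m))^{(i/(2π)) ln(E/E')} (1-m)⁻¹ dm`, in the regularized
beta-function limit sense, equals `-(1/(2πi)) (E - E')⁻¹`. -/
theorem stmt14 (E E' : ℝ) (hE : 0 < E) (hE' : 0 < E') (hne : E ≠ E') :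
    Tendsto
      (fun θ : ℝ =>
        (1 / (4 * (π : ℂ) ^ 2 * (Real.sqrt (E * E') : ℂ))) * Bc
          (1 - (θ : ℂ) / (2 * (π : ℂ)) + (I / (2 * (π : ℂ))) * (Real.log (E / E') : ℂ))
          ((θ : ℂ) / (2 * (π : ℂ)) - (I / (2 * (π : ℂ))) * (Real.log (E / E') : ℂ)))
      (nhdsWithin 0 (Ioi 0))
      (nhds (-(1 / (2 * (π : ℂ) * I)) * (1 / ((E : ℂ) - (E' : ℂ))))) := by
  have hπ : (π : ℂ) ≠ 0 := Complex.ofReal_ne_zero.mpr Real.pi_ne_zero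
  set L : ℝ := Real.log (E / E') with hLdef
  have hLne : L ≠ 0 := by
    intro h
    rcases Real.log_eq_zero.mp h with h1 | h1 | h1
    · exact absurd h1 (div_pos hE hE').ne'
    · exact hne (by field_simp at h1; linarith)
    · nlinarith [div_pos hE hE']
  set A : ℂ := (L / (2 * π) : ℝ) * I with hAdef
  have hcast : ((L / (2 * π) : ℝ) : ℂ) = (L : ℂ) / (2 * (π : ℂ)) := by push_cast; ring
  -- rewrite the function
  have hfun : ∀ θ : ℝ,
      (1 / (4 * (π : ℂ) ^ 2 * (Real.sqrt (E * E') : ℂ))) * Bc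
          (1 - (θ : ℂ) / (2 * (π : ℂ)) + (I / (2 * (π : ℂ))) * (L : ℂ))
          ((θ : ℂ) / (2 * (π : ℂ)) - (I / (2 * (π : ℂ))) * (L : ℂ))
      = (1 / (4 * (π : ℂ) ^ 2 * (Real.sqrt (E * E') : ℂ))) *
        (Complex.Gamma (1 - (θ : ℂ) / (2 * π) + A) * Complex.Gamma ((θ : ℂ) / (2 * π) - A)) := by
    intro θ
    have hA : (I / (2 * (π : ℂ))) * (L : ℂ) = A := by
      rw [hAdef]; push_cast; field_simp
    rw [hA, Bc]
    have : (1 - (θ : ℂ) / (2 * π) + A) + ((θ : ℂ) / (2 * π) - A) = 1 := by ring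
    rw [this, Complex.Gamma_one, div_one]
  simp only [hfun]
  -- continuity
  have hcont : ContinuousAt (fun θ : ℝ =>
      (1 / (4 * (π : ℂ) ^ 2 * (Real.sqrt (E * E') : ℂ))) *
        (Complex.Gamma (1 - (θ : ℂ) / (2 * π) + A) * Complex.Gamma ((θ : ℂ) / (2 * π) - A))) 0 := by
    have haff1 : ContinuousAt (fun θ : ℝ => 1 - (θ : ℂ) / (2 * π) + A) 0 := by fun_prop
    have haff2 : ContinuousAt (fun θ : ℝ => (θ : ℂ) / (2 * π) - A) 0 := by fun_prop
    have him : ((L : ℂ) / (2 * (π : ℂ))).re ≠ 0 := by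
      rw [← hcast, Complex.ofReal_re]
      simp [div_eq_zero_iff, hLne, Real.pi_ne_zero]
    have h1 : DifferentiableAt ℂ Complex.Gamma (1 - ((0:ℝ) : ℂ) / (2 * π) + A) := by
      apply Complex.differentiableAt_Gamma
      intro m h
      have h' := congrArg Complex.im h
      rw [hAdef] at h'
      simp [hAdef] at h'
      exact him h'
    have h2 : DifferentiableAt ℂ Complex.Gamma (((0:ℝ) : ℂ) / (2 * π) - A) := by
      apply Complex.differentiableAt_Gamma
      intro m h
      have h' := congrArg Complex.im h
      rw [hAdef] at h'
      simp [hAdef] at h'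
      exact him h'
    have hc1 : ContinuousAt (fun θ : ℝ => Complex.Gamma (1 - (θ : ℂ) / (2 * π) + A)) 0 :=
      ContinuousAt.comp (f := fun θ : ℝ => 1 - (θ : ℂ) / (2 * π) + A) (x := (0:ℝ)) h1.continuousAt haff1
    have hc2 : ContinuousAt (fun θ : ℝ => Complex.Gamma ((θ : ℂ) / (2 * π) - A)) 0 :=
      ContinuousAt.comp (f := fun θ : ℝ => (θ : ℂ) / (2 * π) - A) (x := (0:ℝ)) h2.continuousAt haff2
    exact continuousAt_const.mul
      (hc1.mul hc2)
  have hT := hcont.tendsto.mono_left (nhdsWithin_le_nhds (s := Ioi (0:ℝ)))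
  convert hT using 2
  have e1 : 1 - ((0:ℝ) : ℂ) / (2 * ↑π) + A = 1 - -A := by push_cast; ring
  have e2 : ((0:ℝ) : ℂ) / (2 * ↑π) - A = -A := by push_cast; ring
  rw [e1, e2]
  have hsin : Complex.sin (↑π * -A) = (Real.sinh (-(L/2)) : ℂ) * I := by
    have harg : (↑π * -A : ℂ) = ((-(L/2) : ℝ) : ℂ) * I := by
      rw [hAdef]; push_cast; field_simp
    rw [harg, Complex.ofReal_sinh, Complex.sin_mul_I]
  have hrefl : Complex.Gamma (1 - -A) * Complex.Gamma (-A)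
      = ↑π / ((Real.sinh (-(L/2)) : ℂ) * I) := by
    rw [mul_comm, Complex.Gamma_mul_Gamma_one_sub, hsin]
  rw [hrefl]
  -- sinh value
  have hEne : Real.sqrt E ≠ 0 := (Real.sqrt_pos.mpr hE).ne'
  have hE'ne : Real.sqrt E' ≠ 0 := (Real.sqrt_pos.mpr hE').ne'
  have hexp : Real.exp (L / 2) = Real.sqrt E / Real.sqrt E' := by
    rw [← Real.sqrt_div hE.le, Real.sqrt_eq_rpow,
      Real.rpow_def_of_pos (div_pos hE hE'), ← hLdef]
    ring_nf
  have hexp' : Real.exp (-(L / 2)) = Real.sqrt E' / Real.sqrt E := by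
    rw [Real.exp_neg, hexp, inv_div]
  have hs : Real.sinh (L / 2) = (E - E') / (2 * Real.sqrt (E * E')) := by
    rw [Real.sinh_eq, hexp, hexp', Real.sqrt_mul hE.le]
    field_simp
    rw [Real.sq_sqrt hE.le, Real.sq_sqrt hE'.le]
  rw [Real.sinh_neg, hs]
  have hc2 : ((-((E - E') / (2 * Real.sqrt (E * E'))) : ℝ) : ℂ)
      = -(((E : ℂ) - (E' : ℂ)) / (2 * (Real.sqrt (E * E') : ℂ))) := by push_cast; ring
  have hSpos : 0 < Real.sqrt (E * E') := Real.sqrt_pos.mpr (mul_pos hE hE')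
  have hSne : ((Real.sqrt (E * E') : ℝ) : ℂ) ≠ 0 := Complex.ofReal_ne_zero.mpr hSpos.ne'
  have hEE : ((E : ℂ) - (E' : ℂ)) ≠ 0 := sub_ne_zero.mpr (by exact_mod_cast hne)
  rw [hc2]
  generalize ((Real.sqrt (E * E') : ℝ) : ℂ) = S at hSne ⊢
  field_simp [hSne, hπ, hEE, Complex.I_ne_zero]
  have hE'E : (E' : ℂ) - (E : ℂ) ≠ 0 := sub_ne_zero.mpr fun h => hne (by exact_mod_cast h.symm)
  have hden : (-((π : ℂ) ^ 2 * S * I * (E : ℂ) * 4) + (π : ℂ) ^ 2 * S * I * (E' : ℂ) * 4) ≠ 0 := by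
    have heq : (-((π : ℂ) ^ 2 * S * I * (E : ℂ) * 4) + (π : ℂ) ^ 2 * S * I * (E' : ℂ) * 4)
        = (π : ℂ) ^ 2 * S * I * 4 * ((E' : ℂ) - (E : ℂ)) := by ring
    rw [heq]
    exact mul_ne_zero (mul_ne_zero (mul_ne_zero (mul_ne_zero
      (pow_ne_zero 2 hπ) hSne) Complex.I_ne_zero) (by norm_num)) hE'E
  ring


end
end
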